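/- arXiv:1709.09246 — 2 statements merged into one kernel-verified Lean document; each statement's English description precedes it below -/
import Mathlib

section
/- Let f : 𝒫 → G be a continuous group homomorphism from 𝒫 = SL(2,ℂ) ⋉ M to a Hausdorff topological group G. Then the following are equivalent: (a) f is injective on some neighbourhood of the identity of 𝒫; (b) the homomorphism M ∋ t ↦ f(I, t) ∈ G is not the trivial homomorphism. Moreover, if (a) and (b) hold, then either f is injective or its kernel is exactly {(I, 0), (−I, 0)}. -/
noncomputable section

/-- SL(2,ℂ). -/
abbrev SL2C := Matrix.SpecialLinearGroup (Fin 2) ℂ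

/-- The additive group of 2×2 self-adjoint complex matrices (Minkowski translations). -/
abbrev HermMat := ↥(selfAdjoint (Matrix (Fin 2) (Fin 2) ℂ))

/-- The matrix topology on SL(2,ℂ). -/
instance : TopologicalSpace SL2C :=
  inferInstanceAs (TopologicalSpace {A : Matrix (Fin 2) (Fin 2) ℂ // A.det = 1})

private lemma conj_selfAdjoint (A : Matrix (Fin 2) (Fin 2) ℂ) (X : HermMat) :
    A * X.val * star A ∈ selfAdjoint (Matrix (Fin 2) (Fin 2) ℂ) := by
  have hX : star X.val = X.val := X.2
  simp only [selfAdjoint.mem_iff]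
  rw [star_mul, star_star, star_mul, hX, ← mul_assoc]

/-- Conjugation X ↦ A X A* as an additive automorphism of the self-adjoint matrices. -/
def conjAct (A : SL2C) : HermMat ≃+ HermMat where
  toFun X := ⟨A.val * X.val * star A.val, conj_selfAdjoint A.val X⟩
  invFun X := ⟨A⁻¹.val * X.val * star A⁻¹.val, conj_selfAdjoint A⁻¹.val X⟩
  left_inv X := by
    apply Subtype.ext
    have h1 : A⁻¹.val * A.val = 1 := by
      rw [← Matrix.SpecialLinearGroup.coe_mul, inv_mul_cancel,
        Matrix.SpecialLinearGroup.coe_one]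
    have h2 : star A.val * star A⁻¹.val = 1 := by
      rw [← star_mul, h1, star_one]
    show A⁻¹.val * (A.val * X.val * star A.val) * star A⁻¹.val = X.val
    calc A⁻¹.val * (A.val * X.val * star A.val) * star A⁻¹.val
        = (A⁻¹.val * A.val) * X.val * (star A.val * star A⁻¹.val) := by
          simp only [mul_assoc]
      _ = X.val := by rw [h1, h2, one_mul, mul_one]
  right_inv X := by
    apply Subtype.ext
    have h1 : A.val * A⁻¹.val = 1 := by
      rw [← Matrix.SpecialLinearGroup.coe_mul, mul_inv_cancel,
        Matrix.SpecialLinearGroup.coe_one]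
    have h2 : star A⁻¹.val * star A.val = 1 := by
      rw [← star_mul, h1, star_one]
    show A.val * (A⁻¹.val * X.val * star A⁻¹.val) * star A.val = X.val
    calc A.val * (A⁻¹.val * X.val * star A⁻¹.val) * star A.val
        = (A.val * A⁻¹.val) * X.val * (star A⁻¹.val * star A.val) := by
          simp only [mul_assoc]
      _ = X.val := by rw [h1, h2, one_mul, mul_one]
  map_add' X Y := by
    apply Subtype.ext
    show A.val * (X.val + Y.val) * star A.val
      = A.val * X.val * star A.val + A.val * Y.val * star A.val
    rw [mul_add, add_mul]

private lemma conjAct_one : conjAct 1 = AddEquiv.refl HermMat := by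
  apply AddEquiv.ext
  intro X
  apply Subtype.ext
  show (1 : SL2C).val * X.val * star (1 : SL2C).val = X.val
  simp

private lemma conjAct_mul (A B : SL2C) :
    conjAct (A * B) = (conjAct B).trans (conjAct A) := by
  apply AddEquiv.ext
  intro X
  apply Subtype.ext
  show (A * B).val * X.val * star (A * B).val
      = A.val * (B.val * X.val * star B.val) * star A.val
  rw [Matrix.SpecialLinearGroup.coe_mul, star_mul]
  simp only [mul_assoc]

/-- The action of SL(2,ℂ) on the translations, as a homomorphism into the automorphism
group of the (multiplicatively written) translation group. -/
def phiAct : SL2C →* MulAut (Multiplicative HermMat) where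
  toFun A := AddEquiv.toMultiplicative (conjAct A)
  map_one' := by
    show AddEquiv.toMultiplicative (conjAct 1) = 1
    rw [conjAct_one]; rfl
  map_mul' A B := by
    show AddEquiv.toMultiplicative (conjAct (A * B))
      = AddEquiv.toMultiplicative (conjAct A) * AddEquiv.toMultiplicative (conjAct B)
    rw [conjAct_mul]; rfl

/-- The universal covering of the proper orthochronous Poincaré group, as the semidirect
product SL(2,ℂ) ⋉ ℝ⁴ (with the translations written multiplicatively). -/
abbrev Poincare := SemidirectProduct (Multiplicative HermMat) SL2C phiAct

/-- The product topology on the Poincaré group. -/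
instance : TopologicalSpace Poincare :=
  TopologicalSpace.induced
    (fun g : Poincare => (g.left, g.right)) instTopologicalSpaceProd

/-- The element −I of SL(2,ℂ). -/
def negOne : SL2C := ⟨-1, by simp [Matrix.det_neg]⟩

/-!
The kernel of `f` on the translations is an additive subgroup of the Hermitian matrices that
is stable under `X ↦ A X A*`. Such a subgroup is `0` or everything: starting from a nonzero
element, differences of conjugates by the unipotents `[[1, z], [0, 1]]` and by the Weyl element
produce every real multiple of `E₁₁`, and conjugates of these span. So if `f` is nontrivial on
translations, it is faithful on them. For `g = (A, t)` in `ker f`, the translation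
`g (I, s) g⁻¹ = (I, A·s)` has the same image as `(I, s)`, so `A` fixes every translation and
is `±I`; since `±I` acts trivially, `g² = (I, 2t)`, whence `t = 0`. Thus
`ker f ⊆ {(I, 0), (−I, 0)}`, and `f` is injective on `{(A, t) | Re A₀₀ > 0}`, because right
multiplication by `−I` flips the sign of `A₀₀`. Conversely, translations accumulate at the
identity, so a locally injective `f` cannot kill all of them.
-/

open SemidirectProduct Topology

lemma SemidirectProduct.mul_inl_mul_inv {N H : Type*} [CommGroup N] [Group H]
    {φ : H →* MulAut N} (g : N ⋊[φ] H) (n : N) : g * inl n * g⁻¹ = inl (φ g.right n) := by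
  ext <;> simp [mul_left, inv_left, mul_right]

lemma Matrix.star_fin_two_of {α : Type*} [Star α] (a b c d : α) :
    star !![a, b; c, d] = !![star a, star c; star b, star d] := by
  ext i j
  fin_cases i <;> fin_cases j <;> rfl

lemma Matrix.of_fin_two_eq_iff {α : Type*} {a b c d a' b' c' d' : α} :
    !![a, b; c, d] = !![a', b'; c', d'] ↔ a = a' ∧ b = b' ∧ c = c' ∧ d = d' := by
  refine ⟨fun h => ⟨congr_fun₂ h 0 0, congr_fun₂ h 0 1, congr_fun₂ h 1 0, congr_fun₂ h 1 1⟩, ?_⟩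
  rintro ⟨rfl, rfl, rfl, rfl⟩
  rfl

def hermOf (a d : ℝ) (b : ℂ) : HermMat :=
  ⟨!![(a : ℂ), b; star b, (d : ℂ)], by simp [selfAdjoint.mem_iff, Matrix.star_fin_two_of]⟩

lemma hermOf_val (a d : ℝ) (b : ℂ) : (hermOf a d b).val = !![(a : ℂ), b; star b, (d : ℂ)] :=
  rfl

lemma hermOf_add (a d a' d' : ℝ) (b b' : ℂ) :
    hermOf a d b + hermOf a' d' b' = hermOf (a + a') (d + d') (b + b') := by
  apply Subtype.ext
  ext i j
  fin_cases i <;> fin_cases j <;> simp [hermOf_val]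

lemma hermOf_neg (a d : ℝ) (b : ℂ) : -hermOf a d b = hermOf (-a) (-d) (-b) := by
  apply Subtype.ext
  ext i j
  fin_cases i <;> fin_cases j <;> simp [hermOf_val]

lemma hermOf_sub (a d a' d' : ℝ) (b b' : ℂ) :
    hermOf a d b - hermOf a' d' b' = hermOf (a - a') (d - d') (b - b') := by
  simp only [sub_eq_add_neg, hermOf_neg, hermOf_add]

lemma hermOf_zero : hermOf 0 0 0 = 0 := by
  apply Subtype.ext
  ext i j
  fin_cases i <;> fin_cases j <;> simp [hermOf_val]

lemma eq_hermOf (X : HermMat) : X = hermOf (X.val 0 0).re (X.val 1 1).re (X.val 0 1) := by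
  have h (i j : Fin 2) : star (X.val j i) = X.val i j := by rw [← Matrix.star_apply, X.2.star_eq]
  have hdiag (i : Fin 2) : ((X.val i i).re : ℂ) = X.val i i := Complex.conj_eq_iff_re.mp (h i i)
  apply Subtype.ext
  rw [hermOf_val, hdiag, hdiag, h 1 0]
  exact Matrix.eta_fin_two X.val

def upperUnipotent (z : ℂ) : SL2C := ⟨!![1, z; 0, 1], by simp [Matrix.det_fin_two_of]⟩

def weyl : SL2C := ⟨!![0, 1; -1, 0], by simp [Matrix.det_fin_two_of]⟩

lemma conjAct_upperUnipotent (z : ℂ) (a d : ℝ) (b : ℂ) :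
    conjAct (upperUnipotent z) (hermOf a d b) =
      hermOf (a + 2 * (z * star b).re + Complex.normSq z * d) d (b + z * d) := by
  have hre : ((2 * (z * star b).re : ℝ) : ℂ) = z * star b + b * star z := by
    rw [Complex.ofReal_mul, Complex.re_eq_add_conj]
    simp only [← Complex.star_def, star_mul', star_star]
    push_cast
    ring
  have hnorm : (Complex.normSq z : ℂ) = star z * z := Complex.normSq_eq_conj_mul_self
  have hd : star (d : ℂ) = d := Complex.conj_ofReal d
  apply Subtype.ext
  simp only [conjAct, upperUnipotent, hermOf_val, AddEquiv.coe_mk, Equiv.coe_fn_mk,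
    Matrix.star_fin_two_of, Matrix.mul_fin_two, Matrix.of_fin_two_eq_iff, star_add, star_mul',
    Complex.ofReal_add, Complex.ofReal_mul, hre, hnorm, star_one, star_zero, hd]
  refine ⟨by ring, by ring, by ring, by ring⟩

lemma conjAct_weyl (a d : ℝ) (b : ℂ) : conjAct weyl (hermOf a d b) = hermOf d a (-star b) := by
  apply Subtype.ext
  simp only [conjAct, weyl, hermOf_val, AddEquiv.coe_mk, Equiv.coe_fn_mk,
    Matrix.star_fin_two_of, Matrix.mul_fin_two, Matrix.of_fin_two_eq_iff, star_neg, star_one,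
    star_zero, star_star]
  refine ⟨by ring, by ring, by ring, by ring⟩

def IsLorentzInvariant (K : AddSubgroup HermMat) : Prop :=
  ∀ (A : SL2C), ∀ X ∈ K, conjAct A X ∈ K

namespace IsLorentzInvariant

variable {K : AddSubgroup HermMat}

lemma conjAct_upperUnipotent_sub_mem (hK : IsLorentzInvariant K) {a d : ℝ} {b : ℂ}
    (h : hermOf a d b ∈ K) (z : ℂ) :
    hermOf (2 * (z * star b).re + Complex.normSq z * d) 0 (z * d) ∈ K := by
  have := K.sub_mem (hK (upperUnipotent z) _ h) h
  rw [conjAct_upperUnipotent, hermOf_sub] at this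
  convert this using 2 <;> ring

lemma hermOf_mem_of_entry11_ne_zero (hK : IsLorentzInvariant K) {a d : ℝ} {b : ℂ}
    (h : hermOf a d b ∈ K) (hd : d ≠ 0) (r : ℝ) : hermOf r 0 0 ∈ K := by
  have hsq (z : ℂ) : hermOf (2 * Complex.normSq z * d) 0 0 ∈ K := by
    -- the terms linear in `z` cancel
    have := K.add_mem (hK.conjAct_upperUnipotent_sub_mem h z)
      (hK.conjAct_upperUnipotent_sub_mem h (-z))
    rw [hermOf_add] at this
    convert this using 2
    · simp only [neg_mul, Complex.neg_re, Complex.normSq_neg]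
      ring
    · ring
    · ring
  have hsqrt {s : ℝ} (hs : 0 ≤ s) : hermOf (s * d) 0 0 ∈ K := by
    have := hsq (Real.sqrt (s / 2))
    rwa [Complex.normSq_ofReal, Real.mul_self_sqrt (by positivity), mul_div_cancel₀ s two_ne_zero]
      at this
  rcases le_total 0 (r / d) with hr | hr
  · simpa [div_mul_cancel₀ r hd] using hsqrt hr
  · simpa [hermOf_neg, div_mul_cancel₀ r hd] using K.neg_mem (hsqrt (neg_nonneg.mpr hr))

lemma hermOf_mem_of_entry01_ne_zero (hK : IsLorentzInvariant K) {a : ℝ} {b : ℂ}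
    (h : hermOf a 0 b ∈ K) (hb : b ≠ 0) (r : ℝ) : hermOf r 0 0 ∈ K := by
  have := hK.conjAct_upperUnipotent_sub_mem h ((r / (2 * Complex.normSq b) : ℝ) * b)
  convert this using 2
  · have hb' : Complex.normSq b ≠ 0 := Complex.normSq_eq_zero.not.mpr hb
    rw [mul_assoc, Complex.star_def, Complex.mul_conj, ← Complex.ofReal_mul, Complex.ofReal_re,
      mul_zero, add_zero]
    field_simp
  · simp

lemma hermOf_mem_of_ne_zero (hK : IsLorentzInvariant K) {X : HermMat} (hX : X ∈ K)
    (hX0 : X ≠ 0) (r : ℝ) : hermOf r 0 0 ∈ K := by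
  rw [eq_hermOf X] at hX hX0
  set a := (X.val 0 0).re
  set d := (X.val 1 1).re
  set b := X.val 0 1
  by_cases hd : d = 0
  · by_cases hb : b = 0
    · have ha : a ≠ 0 := fun ha => hX0 (by rw [ha, hd, hb, hermOf_zero])
      have := hK weyl _ hX
      rw [conjAct_weyl] at this
      exact hK.hermOf_mem_of_entry11_ne_zero this ha r
    · rw [hd] at hX
      exact hK.hermOf_mem_of_entry01_ne_zero hX hb r
  · exact hK.hermOf_mem_of_entry11_ne_zero hX hd r

lemma eq_top_of_ne_zero (hK : IsLorentzInvariant K) {X : HermMat} (hX : X ∈ K)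
    (hX0 : X ≠ 0) : K = ⊤ := by
  have hdiag := hK.hermOf_mem_of_ne_zero hX hX0
  rw [AddSubgroup.eq_top_iff']
  intro Y
  rw [eq_hermOf Y]
  set a := (Y.val 0 0).re
  set d := (Y.val 1 1).re
  set b := Y.val 0 1
  have hweyl (r : ℝ) : hermOf 0 r 0 ∈ K := by simpa [conjAct_weyl] using hK weyl _ (hdiag r)
  -- `[[a, b], [b̄, d]] = u_b E₂₂ u_b* + (a - |b|²) E₁₁ + (d - 1) E₂₂` with `u_b = [[1, b], [0, 1]]`
  have := K.add_mem (K.add_mem (hK (upperUnipotent b) _ (hweyl 1)) (hdiag (a - Complex.normSq b)))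
    (hweyl (d - 1))
  rw [conjAct_upperUnipotent, hermOf_add, hermOf_add] at this
  convert this using 2 <;> simp

lemma eq_bot_or_eq_top (hK : IsLorentzInvariant K) : K = ⊥ ∨ K = ⊤ := by
  refine or_iff_not_imp_left.mpr fun hne => ?_
  obtain ⟨⟨X, hX⟩, hX0⟩ := AddSubgroup.ne_bot_iff_exists_ne_zero.mp hne
  exact hK.eq_top_of_ne_zero hX (by simpa using hX0)

end IsLorentzInvariant

lemma eq_one_or_eq_negOne_of_forall_conjAct_eq {A : SL2C} (h : ∀ X, conjAct A X = X) :
    A = 1 ∨ A = negOne := by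
  have hconj (X : HermMat) : A.val * X.val * star A.val = X.val := congrArg Subtype.val (h X)
  have hunitary : star A.val * A.val = 1 := mul_eq_one_comm.mp (by simpa using hconj 1)
  have hcomm (M : Matrix (Fin 2) (Fin 2) ℂ) : A.val * M = M * A.val := by
    have hherm (X : HermMat) : A.val * X.val = X.val * A.val :=
      calc A.val * X.val = A.val * X.val * star A.val * A.val := by
            rw [mul_assoc _ (star A.val), hunitary, mul_one]
        _ = X.val * A.val := by rw [hconj]
    rw [← realPart_add_I_smul_imaginaryPart M, mul_add, add_mul, mul_smul_comm, smul_mul_assoc,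
      hherm, hherm]
  have hcenter : A ∈ Subgroup.center SL2C :=
    Subgroup.mem_center_iff.mpr fun B => Subtype.ext (hcomm B.val).symm
  obtain ⟨r, hr, hA⟩ := Matrix.SpecialLinearGroup.mem_center_iff.mp hcenter
  rcases (show r = 1 ∨ r = -1 by simpa using hr) with rfl | rfl
  · exact .inl (Subtype.ext (by rw [← hA, map_one]; rfl))
  · exact .inr (Subtype.ext (by rw [← hA, map_neg, map_one]; rfl))

lemma phiAct_negOne : phiAct negOne = 1 := by
  ext X : 2
  apply Subtype.ext
  show (-1 : Matrix (Fin 2) (Fin 2) ℂ) * _ * star (-1) = _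
  simp

lemma negOne_mul_self : negOne * negOne = 1 :=
  Subtype.ext <| by change (-1 : Matrix (Fin 2) (Fin 2) ℂ) * -1 = 1; simp

section Kernel

variable {G : Type*} [Group G] (f : Poincare →* G)

def translationKer : AddSubgroup HermMat := Subgroup.toAddSubgroup' (f.comp inl).ker

lemma mem_translationKer {X : HermMat} :
    X ∈ translationKer f ↔ f (inl (Multiplicative.ofAdd X)) = 1 :=
  Iff.rfl

lemma isLorentzInvariant_translationKer : IsLorentzInvariant (translationKer f) := by
  intro A X hX
  rw [mem_translationKer] at hX ⊢
  change f (inl (phiAct A (Multiplicative.ofAdd X))) = 1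
  rw [inl_aut, map_mul, map_mul, hX, mul_one, ← map_mul, ← map_mul, mul_inv_cancel, map_one,
    map_one]

lemma translationKer_eq_bot (h : ∃ t, f (inl t) ≠ 1) : translationKer f = ⊥ := by
  obtain ⟨t, ht⟩ := h
  refine (isLorentzInvariant_translationKer f).eq_bot_or_eq_top.resolve_right fun htop => ht ?_
  exact (mem_translationKer f).mp (htop ▸ AddSubgroup.mem_top t.toAdd)

variable {f}

lemma right_eq_one_or_eq_negOne_of_map_eq_one (hK : translationKer f = ⊥) {g : Poincare}
    (hg : f g = 1) : g.right = 1 ∨ g.right = negOne := by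
  refine eq_one_or_eq_negOne_of_forall_conjAct_eq fun X => ?_
  have hmem : conjAct g.right X - X ∈ translationKer f := by
    rw [mem_translationKer]
    change f (inl (phiAct g.right (Multiplicative.ofAdd X) / Multiplicative.ofAdd X)) = 1
    rw [map_div, map_div, ← SemidirectProduct.mul_inl_mul_inv, map_mul, map_mul, map_inv, hg,
      one_mul, inv_one, mul_one, div_self']
  rwa [hK, AddSubgroup.mem_bot, sub_eq_zero] at hmem

lemma eq_one_or_eq_inr_negOne_of_map_eq_one (hK : translationKer f = ⊥) {g : Poincare}
    (hg : f g = 1) : g = 1 ∨ g = inr negOne := by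
  have hright := right_eq_one_or_eq_negOne_of_map_eq_one hK hg
  have hφ : phiAct g.right = 1 := by rcases hright with h | h <;> simp [h, phiAct_negOne]
  have hsq : g * g = inl (g.left * g.left) := by
    ext : 1
    · simp [mul_left, hφ]
    · rcases hright with h | h <;> simp [mul_right, h, negOne_mul_self]
  have hleft : g.left = 1 := by
    have hmem : g.left.toAdd + g.left.toAdd ∈ translationKer f := by
      rw [mem_translationKer]
      change f (inl (g.left * g.left)) = 1
      rw [← hsq, map_mul, hg, one_mul]
    rw [hK, AddSubgroup.mem_bot, ← two_smul ℝ, smul_eq_zero] at hmem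
    simpa using hmem
  rw [← inl_left_mul_inr_right g, hleft, map_one, one_mul]
  rcases hright with h | h <;> simp [h]

variable (f) in
lemma coe_ker_subset_of_map_inl_ne_one (h : ∃ t, f (inl t) ≠ 1) :
    (f.ker : Set Poincare) ⊆ {1, inr negOne} :=
  fun _ hg => eq_one_or_eq_inr_negOne_of_map_eq_one (translationKer_eq_bot f h) hg

end Kernel

lemma MonoidHom.injective_or_coe_ker_eq_pair {H G : Type*} [Group H] [Group G] (f : H →* G)
    {c : H} (h : (f.ker : Set H) ⊆ {1, c}) :
    Function.Injective f ∨ (f.ker : Set H) = {1, c} := by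
  by_cases hc : f c = 1
  · refine .inr (h.antisymm ?_)
    rintro g (rfl | rfl)
    exacts [f.ker.one_mem, hc]
  · refine .inl ((injective_iff_map_eq_one f).mpr fun g hg => ?_)
    exact (h hg).resolve_right fun hgc => hc (hgc ▸ hg)

lemma continuous_inl_poincare : Continuous (inl : Multiplicative HermMat → Poincare) :=
  continuous_induced_rng.2 (continuous_id.prodMk continuous_const)

lemma exists_inl_mem_of_mem_nhds {U : Set Poincare} (hU : U ∈ 𝓝 1) :
    ∃ t ≠ 1, inl t ∈ U := by
  let line : ℝ → Multiplicative HermMat := fun r => Multiplicative.ofAdd (r • 1)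
  have hline : Continuous line :=
    continuous_ofAdd.comp (continuous_induced_rng.2 (continuous_id.smul continuous_const))
  have hev : ∀ᶠ r in 𝓝[≠] (0 : ℝ), inl (line r) ∈ U :=
    nhdsWithin_le_nhds ((continuous_inl_poincare.comp hline).tendsto' 0 1 (by simp [line]) hU)
  obtain ⟨r, hrU, hr0⟩ := (hev.and self_mem_nhdsWithin).exists
  have hone : (1 : HermMat) ≠ 0 := fun h => one_ne_zero (congrArg Subtype.val h)
  exact ⟨line r, by simpa [line, hone] using hr0, hrU⟩

lemma setOf_re_pos_mem_nhds_one : {g : Poincare | 0 < (g.right.val 0 0).re} ∈ 𝓝 1 := by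
  refine IsOpen.mem_nhds (isOpen_lt continuous_const ?_) (by simp)
  have hpair : Continuous fun g : Poincare => (g.left, g.right) := continuous_induced_dom
  have hright := hpair.snd
  fun_prop

lemma exists_map_inl_ne_one_of_injOn {G : Type*} [Group G] {f : Poincare →* G} {U : Set Poincare}
    (hU : U ∈ 𝓝 1) (hinj : Set.InjOn f U) : ∃ t, f (inl t) ≠ 1 := by
  obtain ⟨t, ht, htU⟩ := exists_inl_mem_of_mem_nhds hU
  refine ⟨t, fun hft => ht ?_⟩
  exact (map_eq_one_iff _ inl_injective).mp (hinj htU (mem_of_mem_nhds hU) (by rw [hft, map_one]))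

lemma injOn_setOf_re_pos {G : Type*} [Group G] {f : Poincare →* G}
    (hker : (f.ker : Set Poincare) ⊆ {1, inr negOne}) :
    Set.InjOn f {g : Poincare | 0 < (g.right.val 0 0).re} := by
  intro x hx y hy hxy
  rcases hker (show y⁻¹ * x ∈ f.ker by rw [f.mem_ker, map_mul, map_inv, hxy, inv_mul_cancel])
    with h | h
  · exact (inv_mul_eq_one.mp h).symm
  · have hx' : x.right = y.right * negOne := by rw [← mul_inv_cancel_left y x, h]; rfl
    have hentry : x.right.val 0 0 = -y.right.val 0 0 := by
      rw [hx', Matrix.SpecialLinearGroup.coe_mul,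
        show (negOne : Matrix (Fin 2) (Fin 2) ℂ) = -1 from rfl]
      simp
    simp only [Set.mem_ofPred_eq, hentry, Complex.neg_re] at hx hy
    linarith

theorem poincare_local_faithfulness_general
    {G : Type*} [Group G]
    (f : Poincare →* G) :
    ((∃ U ∈ nhds (1 : Poincare), Set.InjOn f U) ↔
      ∃ t : Multiplicative HermMat, f (SemidirectProduct.inl t) ≠ 1) ∧
    ((∃ U ∈ nhds (1 : Poincare), Set.InjOn f U) →
      Function.Injective f ∨
        (f.ker : Set Poincare) = {1, SemidirectProduct.inr negOne}) := by
  have hforward : (∃ U ∈ 𝓝 (1 : Poincare), Set.InjOn f U) → ∃ t, f (inl t) ≠ 1 :=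
    fun ⟨_, hU, hinj⟩ => exists_map_inl_ne_one_of_injOn hU hinj
  refine ⟨⟨hforward, fun h => ?_⟩, fun h => ?_⟩
  · exact ⟨_, setOf_re_pos_mem_nhds_one,
      injOn_setOf_re_pos (coe_ker_subset_of_map_inl_ne_one f h)⟩
  · exact f.injective_or_coe_ker_eq_pair (coe_ker_subset_of_map_inl_ne_one f (hforward h))

/-- For a continuous homomorphism f from the (covering of the) Poincaré group to a
Hausdorff topological group G, local injectivity at the identity is equivalent to the
nontriviality of the restriction of f to the spacetime translations; in that case either
f is injective or its kernel is exactly {(I,0), (−I,0)}. -/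
theorem poincare_local_faithfulness
    {G : Type*} [Group G] [TopologicalSpace G] [IsTopologicalGroup G] [T2Space G]
    (f : Poincare →* G) (hf : Continuous f) :
    ((∃ U ∈ nhds (1 : Poincare), Set.InjOn f U) ↔
      ∃ t : Multiplicative HermMat, f (SemidirectProduct.inl t) ≠ 1) ∧
    ((∃ U ∈ nhds (1 : Poincare), Set.InjOn f U) →
      Function.Injective f ∨
        (f.ker : Set Poincare) = {1, SemidirectProduct.inr negOne}) :=
  poincare_local_faithfulness_general f
end
end

section
/- Every closed normal subgroup of 𝒫 = SL(2,ℂ) ⋉ M is one of the following five subgroups: the trivial subgroup {(I, 0)}; the centre {(I, 0), (−I, 0)}; the translation subgroup {(I, t) : t ∈ M}; the subgroup {(±I, t) : t ∈ M}; or 𝒫 itself. -/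
noncomputable section

/-!
The translations `t` with `(I, t) ∈ N` form an `SL(2,ℂ)`-invariant additive subgroup `T` of `M`.
If `T ≠ 0`, unipotent conjugates of a nonzero element produce a nonzero multiple of the null
vector `e₁ e₁*`; transitivity of `SL(2,ℂ)` on nonzero spinors and rescaling of spinors give all
real multiples of all null vectors `w w*`, and these generate `M` additively, so `T = M`.

If `T = 0`, the commutator of `(I, u)` with `(A, t) ∈ N` is the translation `u - A·u`, so every `A`
occurring in `N` acts trivially on `M`; it is then unitary and commutes with all matrices, i.e.
`A = ±I`, and squaring `(t, -I)` gives `t = 0`. If `T = M`, then `N` is the preimage of its image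
in `SL(2,ℂ)`, a normal subgroup; as `SL(2,ℂ)` is perfect and `PSL(2,ℂ)` is simple, that image is
trivial, the centre `{±I}`, or everything.
-/

open Subgroup Matrix SemidirectProduct
open scoped commutatorElement

theorem Subgroup.Normal.le_center_or_eq_top {G : Type*} [Group G] [Group.IsPerfect G]
    [IsSimpleGroup (G ⧸ center G)] {H : Subgroup G} (hH : H.Normal) :
    H ≤ center G ∨ H = ⊤ := by
  rcases (hH.map _ (QuotientGroup.mk'_surjective (center G))).eq_bot_or_eq_top with h | h
  · left
    rwa [map_eq_bot_iff, QuotientGroup.ker_mk'] at h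
  · right
    have hsup : H ⊔ center G = ⊤ := by
      rw [← QuotientGroup.ker_mk' (center G), ← comap_map_eq, h, comap_top]
    rw [eq_top_iff, ← Group.IsPerfect.commutator_eq_top (G := G), _root_.commutator_def,
      commutator_le]
    intro g _ k _
    obtain ⟨h, hh, z, hz, rfl⟩ := mem_sup_of_normal_right.mp (hsup.symm ▸ mem_top g)
    have hcomm : ⁅h * z, k⁆ = h * (k * h⁻¹ * k⁻¹) := by
      rw [commutatorElement_def, mul_assoc h z k, ← mem_center_iff.mp hz k]
      group
    rw [hcomm]
    exact H.mul_mem hh (hH.conj_mem _ (H.inv_mem hh) k)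

namespace SL2C

@[simp] lemma negOne_val : negOne.val = -1 := rfl

instance : Group.IsPerfect SL2C :=
  ⟨SL2.commutator_eq_top (a := (2 : ℂ)) two_ne_zero (by norm_num)⟩

instance : IsSimpleGroup (SL2C ⧸ center SL2C) :=
  ProjectiveSpecialLinearGroup.rank_two_simple' ⟨2, two_ne_zero, by norm_num⟩

lemma mem_center_iff {A : SL2C} : A ∈ center SL2C ↔ A = 1 ∨ A = negOne := by
  rw [Matrix.SpecialLinearGroup.mem_center_iff, Fintype.card_fin]
  constructor
  · rintro ⟨r, hr, hA⟩
    rcases sq_eq_one_iff.mp hr with rfl | rfl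
    · exact Or.inl (Subtype.ext (hA.symm.trans (map_one _)))
    · exact Or.inr (Subtype.ext (by rw [← hA, map_neg, map_one, negOne_val]))
  · rintro (rfl | rfl)
    · exact ⟨1, one_pow _, map_one _⟩
    · exact ⟨-1, by norm_num, by rw [map_neg, map_one, negOne_val]⟩

lemma normal_eq_bot_or_eq_center_or_eq_top {H : Subgroup SL2C} (hH : H.Normal) :
    H = ⊥ ∨ (H : Set SL2C) = {1, negOne} ∨ H = ⊤ := by
  rcases hH.le_center_or_eq_top with hZ | hZ
  · by_cases hneg : negOne ∈ H
    · refine Or.inr (Or.inl (Set.Subset.antisymm (fun A hA => mem_center_iff.mp (hZ hA)) ?_))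
      rintro A (rfl | rfl)
      exacts [H.one_mem, hneg]
    · refine Or.inl ((eq_bot_iff_forall H).mpr fun A hA => ?_)
      exact (mem_center_iff.mp (hZ hA)).resolve_right fun h => hneg (h ▸ hA)
  · exact Or.inr (Or.inr hZ)

abbrev upper (x : ℂ) : SL2C := SpecialLinearGroup.transvection (zero_ne_one' (Fin 2)) x

lemma exists_mulVec_eq {v : Fin 2 → ℂ} (hv : v ≠ 0) :
    ∃ A : SL2C, A.val *ᵥ ![1, 0] = v := by
  have hcop : IsCoprime (v 0) (v 1) := by
    by_cases h0 : v 0 = 0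
    · have h1 : v 1 ≠ 0 := fun h1 => hv (by ext i; fin_cases i <;> simp [h0, h1])
      exact ⟨0, (v 1)⁻¹, by simp [h1]⟩
    · exact ⟨(v 0)⁻¹, 0, by simp [h0]⟩
  obtain ⟨A, h0, h1⟩ := hcop.exists_SL2_col 0
  refine ⟨A, ?_⟩
  ext i
  fin_cases i <;> simp [mulVec, dotProduct, Fin.sum_univ_two, h0, h1]

end SL2C

namespace HermMat

@[simp] lemma conjAct_val (A : SL2C) (X : HermMat) :
    (conjAct A X).val = A.val * X.val * star A.val := rfl

lemma conjAct_smul (A : SL2C) (c : ℝ) (X : HermMat) :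
    conjAct A (c • X) = c • conjAct A X := by
  ext : 1
  simp only [conjAct_val, selfAdjoint.val_smul, Matrix.mul_smul, Matrix.smul_mul]

lemma apply_one_zero (X : HermMat) : X.val 1 0 = star (X.val 0 1) :=
  (IsHermitian.apply X.2 1 0).symm

lemma star_apply_self (X : HermMat) (i : Fin 2) : star (X.val i i) = X.val i i :=
  IsHermitian.apply X.2 i i

lemma ofReal_re_apply_self (X : HermMat) (i : Fin 2) : ((X.val i i).re : ℂ) = X.val i i :=
  Complex.conj_eq_iff_re.mp (star_apply_self X i)

/-- The null vector `w w*` of the spinor `w`. -/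
def nullVector (w : Fin 2 → ℂ) : HermMat :=
  ⟨vecMulVec w (star w), by
    rw [selfAdjoint.mem_iff, star_eq_conjTranspose, conjTranspose_vecMulVec, star_star]⟩

@[simp] lemma nullVector_apply (w : Fin 2 → ℂ) (i j : Fin 2) :
    (nullVector w).val i j = w i * star (w j) := rfl

lemma nullVector_zero : nullVector 0 = 0 := by
  ext : 1
  simp [nullVector]

lemma nullVector_smul (s : ℝ) (w : Fin 2 → ℂ) :
    nullVector ((s : ℂ) • w) = s ^ 2 • nullVector w := by
  ext i j
  simp only [nullVector_apply, selfAdjoint.val_smul, Matrix.smul_apply, Pi.smul_apply,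
    Complex.coe_smul, Complex.real_smul, star_mul', RCLike.star_def, Complex.conj_ofReal,
    Complex.ofReal_pow]
  ring

lemma conjAct_nullVector (A : SL2C) (w : Fin 2 → ℂ) :
    conjAct A (nullVector w) = nullVector (A.val *ᵥ w) := by
  ext : 1
  simp only [conjAct_val, nullVector, mul_vecMulVec, vecMulVec_mul, star_mulVec,
    star_eq_conjTranspose]

lemma smul_nullVector_e₁_apply (c : ℝ) (i j : Fin 2) :
    (c • nullVector ![1, 0]).val i j = !![(c : ℂ), 0; 0, 0] i j := by
  fin_cases i <;> fin_cases j <;> simp [Complex.real_smul]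

lemma eq_sum_smul_nullVector (X : HermMat) :
    X = (X.val 0 0).re • nullVector ![1, 0] + (X.val 1 1).re • nullVector ![0, 1] +
      (1 / 2 : ℝ) • nullVector ![X.val 0 1, 1] - (1 / 2 : ℝ) • nullVector ![X.val 0 1, -1] := by
  ext i j
  fin_cases i <;> fin_cases j <;>
    simp [Complex.real_smul, ofReal_re_apply_self, apply_one_zero] <;> ring

lemma conjAct_upper_val (x : ℂ) (X : HermMat) :
    (conjAct (SL2C.upper x) X).val =
      !![X.val 0 0 + x * star (X.val 0 1) + star x * X.val 0 1 + x * star x * X.val 1 1,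
          X.val 0 1 + x * X.val 1 1;
        star (X.val 0 1) + star x * X.val 1 1, X.val 1 1] := by
  ext i j
  fin_cases i <;> fin_cases j <;>
    simp [SpecialLinearGroup.transvection_coe, Matrix.mul_apply, Fin.sum_univ_two, single_apply,
      star_eq_conjTranspose, apply_one_zero, star_apply_self]
  ring

section Invariant

variable {T : AddSubgroup HermMat} (hT : ∀ (A : SL2C), ∀ X ∈ T, conjAct A X ∈ T)
include hT

lemma exists_smul_nullVector_mem {X : HermMat} (hX : X ∈ T) (hX0 : X ≠ 0) :
    ∃ c : ℝ, c ≠ 0 ∧ c • nullVector ![1, 0] ∈ T := by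
  by_cases hb : X.val 1 1 = 0
  · by_cases hz : X.val 0 1 = 0
    · have hX_eq : (X.val 0 0).re • nullVector ![1, 0] = X := by
        ext i j
        fin_cases i <;> fin_cases j <;>
          simp [smul_nullVector_e₁_apply, ofReal_re_apply_self, hz, hb, apply_one_zero]
      refine ⟨(X.val 0 0).re, fun ha => hX0 ?_, by rwa [hX_eq]⟩
      rw [← hX_eq, ha, zero_smul]
    · refine ⟨2 * Complex.normSq (X.val 0 1), by simpa using hz, ?_⟩
      convert T.sub_mem (hT (SL2C.upper (X.val 0 1)) X hX) hX using 1
      ext1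
      rw [AddSubgroupClass.coe_sub, conjAct_upper_val]
      ext i j
      fin_cases i <;> fin_cases j <;> simp [smul_nullVector_e₁_apply, hb, apply_one_zero]
      rw [Complex.normSq_eq_conj_mul_self]
      ring
  -- the second difference in `x` of `upper x · X` is `2 |x|² X₁₁ e₁ e₁*`
  · refine ⟨2 * (X.val 1 1).re,
      mul_ne_zero two_ne_zero fun h => hb (by rw [← ofReal_re_apply_self, h, Complex.ofReal_zero]),
      ?_⟩
    convert T.sub_mem (T.add_mem (hT (SL2C.upper 1) X hX) (hT (SL2C.upper (-1)) X hX))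
      (T.add_mem hX hX) using 1
    ext1
    rw [AddSubgroupClass.coe_sub, AddMemClass.coe_add, AddMemClass.coe_add, conjAct_upper_val,
      conjAct_upper_val]
    ext i j
    fin_cases i <;> fin_cases j <;>
      simp [smul_nullVector_e₁_apply, ofReal_re_apply_self, apply_one_zero] <;> ring

lemma smul_nullVector_mem {c : ℝ} (hc : c ≠ 0) (h : c • nullVector ![1, 0] ∈ T) (r : ℝ)
    (w : Fin 2 → ℂ) : r • nullVector w ∈ T := by
  have hc_all : ∀ w, c • nullVector w ∈ T := by
    intro w
    rcases eq_or_ne w 0 with rfl | hw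
    · rw [nullVector_zero, smul_zero]
      exact T.zero_mem
    obtain ⟨A, rfl⟩ := SL2C.exists_mulVec_eq hw
    rw [← conjAct_nullVector, ← conjAct_smul]
    exact hT A _ h
  -- rescaling the spinor by `s` rescales its null vector by `s ^ 2`; negatives give the rest
  have hsq : ∀ s : ℝ, (c * s ^ 2) • nullVector w ∈ T := fun s => by
    rw [mul_smul, ← nullVector_smul]
    exact hc_all _
  rcases le_total 0 (r / c) with hrc | hrc
  · have hr : c * √(r / c) ^ 2 = r := by
      rw [Real.sq_sqrt hrc]
      field_simp
    simpa [hr] using hsq √(r / c)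
  · have hr : c * √(-(r / c)) ^ 2 = -r := by
      rw [Real.sq_sqrt (neg_nonneg.mpr hrc)]
      field_simp
    simpa [hr] using T.neg_mem (hsq √(-(r / c)))

theorem eq_top_of_conjAct_mem {X : HermMat} (hX : X ∈ T) (hX0 : X ≠ 0) : T = ⊤ := by
  obtain ⟨c, hc, h⟩ := exists_smul_nullVector_mem hT hX hX0
  have hmem := smul_nullVector_mem hT hc h
  refine (AddSubgroup.eq_top_iff' T).mpr fun Y => ?_
  rw [eq_sum_smul_nullVector Y]
  exact T.sub_mem (T.add_mem (T.add_mem (hmem _ _) (hmem _ _)) (hmem _ _)) (hmem _ _)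

end Invariant

theorem mem_center_of_forall_conjAct_eq {A : SL2C} (h : ∀ X, conjAct A X = X) :
    A ∈ center SL2C := by
  have hunitary : A.val * star A.val = 1 := by
    simpa using congrArg Subtype.val (h 1)
  -- `A` is unitary, so fixing `X` under `X ↦ A X A*` means commuting with `X`
  have hherm : ∀ X : HermMat, Commute A.val X.val := fun X => by
    calc A.val * X.val = A.val * X.val * star A.val * A.val := by
          rw [mul_assoc _ (star _), mul_eq_one_comm.mp hunitary, mul_one]
      _ = X.val * A.val := by rw [← conjAct_val, h]
  have hall : ∀ B : Matrix (Fin 2) (Fin 2) ℂ, Commute A.val B := fun B => by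
    rw [← realPart_add_I_smul_imaginaryPart B]
    exact (hherm _).add_right ((hherm _).smul_right _)
  exact Subgroup.mem_center_iff.mpr fun B => Subtype.ext (hall B.val).eq.symm

end HermMat
namespace Poincare

def translations (N : Subgroup Poincare) : AddSubgroup HermMat :=
  Subgroup.toAddSubgroup' (N.comap inl)

lemma mem_translations {N : Subgroup Poincare} {X : HermMat} :
    X ∈ translations N ↔ inl (Multiplicative.ofAdd X) ∈ N := Iff.rfl

@[simp] lemma phiAct_ofAdd (A : SL2C) (X : HermMat) :
    phiAct A (Multiplicative.ofAdd X) = Multiplicative.ofAdd (conjAct A X) := rfl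

lemma phiAct_negOne : phiAct negOne = 1 :=
  MulEquiv.ext fun l => show Multiplicative.ofAdd (conjAct negOne l.toAdd) = l from
    congrArg Multiplicative.ofAdd <| Subtype.ext <| by simp; rfl

variable {N : Subgroup Poincare}

lemma conjAct_mem_translations (hN : N.Normal) (A : SL2C) {X : HermMat}
    (hX : X ∈ translations N) : conjAct A X ∈ translations N := by
  have h := hN.conj_mem _ hX (inr A)
  rwa [← map_inv, ← inl_aut] at h

lemma sub_conjAct_mem_translations (hN : N.Normal) {n : Poincare} (hn : n ∈ N) (X : HermMat) :
    X - conjAct n.right X ∈ translations N := by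
  have h := N.mul_mem (hN.conj_mem n hn (inl (Multiplicative.ofAdd X))) (N.inv_mem hn)
  have hcomm : inl (Multiplicative.ofAdd X) * n * (inl (Multiplicative.ofAdd X))⁻¹ * n⁻¹ =
      inl (Multiplicative.ofAdd (X - conjAct n.right X)) := by
    apply SemidirectProduct.ext
    · simp [sub_eq_add_neg, mul_comm, mul_assoc]
    · simp [div_eq_mul_inv]
  rwa [hcomm] at h

lemma translations_eq_bot_or_eq_top (hN : N.Normal) :
    translations N = ⊥ ∨ translations N = ⊤ := by
  rcases (translations N).bot_or_exists_ne_zero with hT | ⟨X, hX, hX0⟩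
  · exact Or.inl hT
  · exact Or.inr <| HermMat.eq_top_of_conjAct_mem (fun A _ => conjAct_mem_translations hN A) hX hX0

lemma eq_one_or_eq_inr_negOne (hN : N.Normal) (hT : translations N = ⊥) {n : Poincare}
    (hn : n ∈ N) : n = 1 ∨ n = inr negOne := by
  have hker : ∀ m ∈ N, m.right = 1 → m = 1 := fun m hm hright => by
    have hm_eq : m = inl m.left := SemidirectProduct.ext rfl hright
    have hleft : Multiplicative.toAdd m.left ∈ translations N := by rwa [hm_eq] at hm
    rw [hT, AddSubgroup.mem_bot] at hleft
    rw [hm_eq, show m.left = 1 from hleft, map_one]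
  have hcentral : n.right ∈ center SL2C := HermMat.mem_center_of_forall_conjAct_eq fun X =>
    (sub_eq_zero.mp (by simpa [hT] using sub_conjAct_mem_translations hN hn X)).symm
  rcases SL2C.mem_center_iff.mp hcentral with h | h
  · exact Or.inl (hker n hn h)
  · right
    -- `-I` acts trivially, so `n * n = (2 t, I)` lies in `N`
    have hsq : n * n = 1 := hker _ (N.mul_mem hn hn) (by ext : 1; simp [h])
    have hleft : Multiplicative.toAdd n.left + Multiplicative.toAdd n.left = 0 := by
      simpa [h, phiAct_negOne] using congrArg (fun g : Poincare => Multiplicative.toAdd g.left) hsq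
    rw [← two_smul ℝ, smul_eq_zero] at hleft
    exact SemidirectProduct.ext (by simpa using hleft.resolve_left two_ne_zero) (by simp [h])

lemma eq_bot_or_coe_eq_of_translations_eq_bot (hN : N.Normal) (hT : translations N = ⊥) :
    N = ⊥ ∨ (N : Set Poincare) = {1, inr negOne} := by
  by_cases hneg : inr negOne ∈ N
  · refine Or.inr (Set.Subset.antisymm (fun n hn => eq_one_or_eq_inr_negOne hN hT hn) ?_)
    rintro _ (rfl | rfl)
    exacts [N.one_mem, hneg]
  · refine Or.inl ((eq_bot_iff_forall N).mpr fun n hn => ?_)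
    exact (eq_one_or_eq_inr_negOne hN hT hn).resolve_right fun h => hneg (h ▸ hn)

lemma eq_comap_map_rightHom (hT : translations N = ⊤) :
    N = (N.map rightHom).comap rightHom := by
  rw [comap_map_eq, ← range_inl_eq_ker_rightHom, left_eq_sup]
  rintro _ ⟨l, rfl⟩
  exact mem_translations.mp (hT ▸ AddSubgroup.mem_top (Multiplicative.toAdd l))

end Poincare

open Poincare in
theorem poincare_closed_normal_subgroups_general
    (N : Subgroup Poincare) (hnormal : N.Normal) :
    N = ⊥ ∨
    (N : Set Poincare) = {1, SemidirectProduct.inr negOne} ∨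
    (N : Set Poincare) = {g : Poincare | g.right = 1} ∨
    (N : Set Poincare) = {g : Poincare | g.right = 1 ∨ g.right = negOne} ∨
    N = ⊤ := by
  rcases translations_eq_bot_or_eq_top hnormal with hT | hT
  · rcases eq_bot_or_coe_eq_of_translations_eq_bot hnormal hT with h | h
    exacts [Or.inl h, Or.inr (Or.inl h)]
  · have hN := eq_comap_map_rightHom hT
    rcases SL2C.normal_eq_bot_or_eq_center_or_eq_top (hnormal.map _ rightHom_surjective)
      with h | h | h
    · refine Or.inr (Or.inr (Or.inl ?_))
      rw [hN, h]
      ext g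
      simp
    · refine Or.inr (Or.inr (Or.inr (Or.inl ?_)))
      rw [hN, coe_comap, h]
      ext g
      simp
    · exact Or.inr (Or.inr (Or.inr (Or.inr (by rw [hN, h, comap_top]))))

/-- Every closed normal subgroup of the (covering of the) Poincaré group is one of:
the trivial subgroup, the centre {(I,0),(−I,0)}, the translation subgroup,
the subgroup {(±I,t)}, or the whole group. -/
theorem poincare_closed_normal_subgroups
    (N : Subgroup Poincare) (hclosed : IsClosed (N : Set Poincare)) (hnormal : N.Normal) :
    N = ⊥ ∨
    (N : Set Poincare) = {1, SemidirectProduct.inr negOne} ∨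
    (N : Set Poincare) = {g : Poincare | g.right = 1} ∨
    (N : Set Poincare) = {g : Poincare | g.right = 1 ∨ g.right = negOne} ∨
    N = ⊤ :=
  poincare_closed_normal_subgroups_general N hnormal
end
end
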